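/- arXiv:2402.10451 — 4 statements merged into one kernel-verified Lean document; each statement's English description precedes it below -/
import Mathlib

section
/- Let g and h be non-identical linear functions. Then: (i) h∘g(x) < g∘h(x) for all x∈ℝ if and only if θ(h)−θ(g) ∈ (0,π)_{2π}; (ii) h∘g = g∘h if and only if θ(h)−θ(g) ∈ {0,π}_{2π}. Moreover, for every x∈ℝ, g∘h(x) − h∘g(x) = β(g)(1−α(h)) − β(h)(1−α(g)) = ‖vec(g)‖·‖vec(h)‖·sin(θ(h)−θ(g)). -/
/-- A linear function `x ↦ a*x + b`. -/
structure LinFun where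
  a : ℝ
  b : ℝ

namespace LinFun

/-- Evaluation of a linear function. -/
def eval (f : LinFun) (x : ℝ) : ℝ := f.a * x + f.b

/-- Composition: `h.comp g` is the linear function `x ↦ h (g x)`. -/
def comp (h g : LinFun) : LinFun := ⟨h.a * g.a, h.a * g.b + h.b⟩

/-- The identical linear function `x ↦ x`. -/
def idf : LinFun := ⟨1, 0⟩

/-- `f` is the identical function (equivalently, its vector `(β f, 1 - α f)` is `(0,0)`,
i.e. its angle is `⊥`). -/
def IsId (f : LinFun) : Prop := f = idf

/-- The Euclidean norm of the vector `(β f, 1 - α f)` associated to `f`. -/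
noncomputable def vecNorm (f : LinFun) : ℝ := Real.sqrt (f.b ^ 2 + (1 - f.a) ^ 2)

/-- The polar angle in `[0, 2π)` of the vector `(β f, 1 - α f)` associated to `f`
(meaningful only when `f` is not identical). -/
noncomputable def theta (f : LinFun) : ℝ :=
  if 0 ≤ Complex.arg ⟨f.b, 1 - f.a⟩ then Complex.arg ⟨f.b, 1 - f.a⟩
  else Complex.arg ⟨f.b, 1 - f.a⟩ + 2 * Real.pi

end LinFun

/-- Congruence of angles modulo `2π`: `x ≡_{2π} y`. -/
def Cong (x y : ℝ) : Prop := ∃ k : ℤ, x - y = 2 * Real.pi * k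

/-- The set `[t1, t2]_{2π}`. -/
def Icc2pi (t1 t2 : ℝ) : Set ℝ :=
  {θ | ∃ l1 l2 : ℝ, Cong l1 t1 ∧ Cong l2 t2 ∧ 0 ≤ l2 - l1 ∧ l2 - l1 < 2 * Real.pi ∧
    θ ∈ Set.Icc l1 l2}

/-- The set `(t1, t2)_{2π}`. -/
def Ioo2pi (t1 t2 : ℝ) : Set ℝ :=
  {θ | ∃ l1 l2 : ℝ, Cong l1 t1 ∧ Cong l2 t2 ∧ 0 ≤ l2 - l1 ∧ l2 - l1 < 2 * Real.pi ∧
    θ ∈ Set.Ioo l1 l2}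

/-- Composite of a list of linear functions: `compList [g₁, …, g_m] = g_m ∘ ⋯ ∘ g₁`. -/
def compList (L : List LinFun) : LinFun := L.foldl (fun acc g => g.comp acc) LinFun.idf

/-- The list `f_{σ(1)}, …, f_{σ(n)}` (0-indexed positions). -/
def permList {n : ℕ} (f : Fin n → LinFun) (σ : Equiv.Perm (Fin n)) : List LinFun :=
  List.ofFn fun i => f (σ i)

/-- `f^σ = f_{σ(n)} ∘ ⋯ ∘ f_{σ(1)}`. -/
def permComp {n : ℕ} (f : Fin n → LinFun) (σ : Equiv.Perm (Fin n)) : LinFun :=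
  compList (permList f σ)

/-- The composite of the functions at the (0-indexed) positions `a, a+1, …, b` of `σ`:
`f_{σ(b)} ∘ ⋯ ∘ f_{σ(a)}` (in 0-indexed notation). -/
def segComp {n : ℕ} (f : Fin n → LinFun) (σ : Equiv.Perm (Fin n)) (a b : ℕ) : LinFun :=
  compList (((permList f σ).drop a).take (b + 1 - a))

/-- The composite corresponding to the `k`-shift `σ_k` of `σ`:
`f^{σ_k} = f_{σ(k)} ∘ ⋯ ∘ f_{σ(1)} ∘ f_{σ(n)} ∘ ⋯ ∘ f_{σ(k+1)}` (1-indexed notation). -/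
def shiftComp {n : ℕ} (f : Fin n → LinFun) (σ : Equiv.Perm (Fin n)) (k : ℕ) : LinFun :=
  compList ((permList f σ).rotate k)

/-- `σ` is a minimum (optimal) permutation for `f₁, …, f_n`. -/
def IsMinimum {n : ℕ} (f : Fin n → LinFun) (σ : Equiv.Perm (Fin n)) : Prop :=
  ∀ ρ : Equiv.Perm (Fin n), (permComp f σ).b ≤ (permComp f ρ).b

/-- `μ` belongs to the neighbourhood `N(σ)`: it is obtained from `σ` by swapping two
adjacent blocks of positions, `(l, …, m)` and `(m+1, …, r)` (0-indexed, `l ≤ m < r < n`). -/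
def InNbhd {n : ℕ} (σ μ : Equiv.Perm (Fin n)) : Prop :=
  ∃ (l m r : ℕ) (_ : l ≤ m) (_ : m < r) (_ : r < n),
    (∀ i : Fin n, (i.val < l ∨ r < i.val) → μ i = σ i) ∧
    (∀ i : Fin n, ∀ _ : l ≤ i.val, ∀ _ : i.val < l + r - m,
      μ i = σ ⟨i.val + m + 1 - l, by omega⟩) ∧
    (∀ i : Fin n, ∀ _ : l + r - m ≤ i.val, ∀ _ : i.val ≤ r,
      μ i = σ ⟨i.val + m - r, by omega⟩)

/-- `σ` is locally optimal for `f₁, …, f_n`. -/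
def LocallyOptimal {n : ℕ} (f : Fin n → LinFun) (σ : Equiv.Perm (Fin n)) : Prop :=
  ∀ μ : Equiv.Perm (Fin n), InNbhd σ μ → (permComp f σ).b ≤ (permComp f μ).b

/-- `σ` is counterclockwise: ignoring the identical functions, some rotation of the sequence
of angles `θ(f_{σ(1)}), …, θ(f_{σ(n)})` is nondecreasing. -/
def Counterclockwise {n : ℕ} (f : Fin n → LinFun) (σ : Equiv.Perm (Fin n)) : Prop :=
  ∃ c : ℕ, ∀ i j : Fin n, ¬ (f (σ i)).IsId → ¬ (f (σ j)).IsId →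
    ((c ≤ i.val ∧ i ≤ j) ∨ (i ≤ j ∧ j.val < c) ∨ (c ≤ i.val ∧ j.val < c)) →
    (f (σ i)).theta ≤ (f (σ j)).theta

/-- `f₁, …, f_n` are colinear: all vectors lie on one line through the origin. -/
def Colinear {n : ℕ} (f : Fin n → LinFun) : Prop :=
  ∃ lam : ℝ, ∀ i : Fin n,
    (f i).IsId ∨ Cong ((f i).theta) lam ∨ Cong ((f i).theta) (lam + Real.pi)

/-- `f₁, …, f_n` are potentially identical: some counterclockwise permutation composes
to the identical function. -/
def PotentiallyIdentical {n : ℕ} (f : Fin n → LinFun) : Prop :=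
  ∃ σ : Equiv.Perm (Fin n), Counterclockwise f σ ∧ (permComp f σ).IsId

/-- The ε-perturbation `f^{(ε)}` of a linear function. -/
noncomputable def epsPert (f : LinFun) (ε : ℝ) : LinFun := if f.a = 0 then ⟨ε, f.b⟩ else f

/-!
`g ∘ h - h ∘ g` is the constant `β(g)(1 - α(h)) - β(h)(1 - α(g))`, the cross product of
`vec g` and `vec h`. Reading the vectors as complex numbers, whose arguments agree with the
angles `θ` modulo `2π`, this cross product is `‖vec g‖ ‖vec h‖ sin (θ h - θ g)`, so for
non-identical `g`, `h` its sign is the sign of that sine.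
-/

open Real

lemma Complex.re_mul_im_sub_re_mul_im (z w : ℂ) :
    z.re * w.im - w.re * z.im = ‖z‖ * ‖w‖ * Real.sin (w.arg - z.arg) := by
  rw [← z.norm_mul_cos_arg, ← z.norm_mul_sin_arg, ← w.norm_mul_cos_arg, ← w.norm_mul_sin_arg,
    Real.sin_sub]
  ring

lemma cong_iff_coe_angle_eq {x y : ℝ} : Cong x y ↔ (x : Angle) = y :=
  Angle.angle_eq_iff_two_pi_dvd_sub.symm

lemma sin_eq_zero_iff_cong {x : ℝ} : sin x = 0 ↔ Cong x 0 ∨ Cong x π := by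
  simp only [cong_iff_coe_angle_eq, ← Angle.sin_coe, Angle.sin_eq_zero_iff, Angle.coe_zero]

lemma mem_Ioo2pi_zero_pi_iff {x : ℝ} :
    x ∈ Ioo2pi 0 π ↔ ∃ k : ℤ, x - 2 * π * k ∈ Set.Ioo 0 π := by
  constructor
  · rintro ⟨l₁, l₂, ⟨k₁, hk₁⟩, ⟨k₂, hk₂⟩, -, hlen, hl₁, hl₂⟩
    -- `l₂ - l₁ = π + 2π (k₂ - k₁)` lies in `[0, 2π)`, which forces `k₂ = k₁`
    have hk : k₂ = k₁ := by
      have hlt : ((k₂ - k₁ : ℤ) : ℝ) < 1 := by push_cast; nlinarith [pi_pos]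
      have hgt : (-1 : ℝ) < ((k₂ - k₁ : ℤ) : ℝ) := by push_cast; nlinarith [pi_pos]
      have : k₂ - k₁ < 1 := by exact_mod_cast hlt
      have : -1 < k₂ - k₁ := by exact_mod_cast hgt
      omega
    subst hk
    exact ⟨k₂, by linarith, by linarith⟩
  · rintro ⟨k, hk₀, hkπ⟩
    exact ⟨2 * π * k, 2 * π * k + π, ⟨k, by ring⟩, ⟨k, by ring⟩, by linarith [pi_pos],
      by linarith [pi_pos], by linarith, by linarith⟩

lemma sin_pos_iff_mem_Ioo2pi {x : ℝ} : 0 < sin x ↔ x ∈ Ioo2pi 0 π := by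
  rw [mem_Ioo2pi_zero_pi_iff]
  constructor
  · intro hx
    set y := (x : Angle).toReal
    obtain ⟨k, hk⟩ : Cong x y := cong_iff_coe_angle_eq.mpr (Angle.coe_toReal _).symm
    have hsin : sin y = sin x := by rw [Angle.sin_toReal, Angle.sin_coe]
    have hy₀ : 0 < y := by
      by_contra! hy
      linarith [sin_nonpos_of_nonpos_of_neg_pi_le hy (Angle.neg_pi_lt_toReal _).le]
    have hyπ : y < π := by
      refine (Angle.toReal_le_pi _).lt_of_ne fun hy => ?_
      rw [show y = π from hy, sin_pi] at hsin
      linarith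
    exact ⟨k, by linarith, by linarith⟩
  · rintro ⟨k, hk⟩
    have hpos := sin_pos_of_mem_Ioo hk
    rwa [show x - 2 * π * k = x - k * (2 * π) by ring, sin_sub_int_mul_two_pi] at hpos

namespace LinFun

def vec (f : LinFun) : ℂ := ⟨f.b, 1 - f.a⟩

lemma vec_ne_zero {f : LinFun} (hf : ¬ f.IsId) : f.vec ≠ 0 := by
  intro h
  apply hf
  have hb : f.b = 0 := congrArg Complex.re h
  have ha : 1 - f.a = 0 := congrArg Complex.im h
  cases f
  simp only [IsId, idf, mk.injEq] at hb ha ⊢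
  constructor <;> linarith

lemma vecNorm_eq_norm_vec (f : LinFun) : f.vecNorm = ‖f.vec‖ := by
  rw [vecNorm, Complex.norm_def, Complex.normSq_apply, vec, sq, sq]

lemma vecNorm_pos {f : LinFun} (hf : ¬ f.IsId) : 0 < f.vecNorm := by
  rw [vecNorm_eq_norm_vec]
  exact norm_pos_iff.mpr (vec_ne_zero hf)

lemma coe_theta (f : LinFun) : (f.theta : Angle) = f.vec.arg := by
  unfold theta vec
  split_ifs <;> simp

lemma comp_eval_sub_comp_eval (g h : LinFun) (x : ℝ) :
    (g.comp h).eval x - (h.comp g).eval x = g.b * (1 - h.a) - h.b * (1 - g.a) := by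
  simp only [eval, comp]
  ring

lemma comp_eval_lt_comp_eval_iff (g h : LinFun) (x : ℝ) :
    (h.comp g).eval x < (g.comp h).eval x ↔ 0 < g.b * (1 - h.a) - h.b * (1 - g.a) := by
  rw [← sub_pos, comp_eval_sub_comp_eval]

lemma comp_comm_iff (g h : LinFun) :
    h.comp g = g.comp h ↔ g.b * (1 - h.a) - h.b * (1 - g.a) = 0 := by
  simp only [comp, mk.injEq, mul_comm h.a g.a, true_and]
  constructor <;> intro _ <;> linarith

lemma cross_eq_vecNorm_mul_sin (g h : LinFun) :
    g.b * (1 - h.a) - h.b * (1 - g.a) = g.vecNorm * h.vecNorm * sin (h.theta - g.theta) := by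
  rw [vecNorm_eq_norm_vec, vecNorm_eq_norm_vec, ← Angle.sin_coe, Angle.coe_sub, coe_theta,
    coe_theta, ← Angle.coe_sub, Angle.sin_coe, ← Complex.re_mul_im_sub_re_mul_im]
  rfl

end LinFun

/-- Lemma on commutation of two linear functions. -/
theorem stmt0 (g h : LinFun) (hg : ¬ g.IsId) (hh : ¬ h.IsId) :
    ((∀ x : ℝ, (h.comp g).eval x < (g.comp h).eval x) ↔
      h.theta - g.theta ∈ Ioo2pi 0 Real.pi) ∧
    (h.comp g = g.comp h ↔
      (Cong (h.theta - g.theta) 0 ∨ Cong (h.theta - g.theta) Real.pi)) ∧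
    (∀ x : ℝ, (g.comp h).eval x - (h.comp g).eval x
      = g.b * (1 - h.a) - h.b * (1 - g.a)) ∧
    (∀ x : ℝ, (g.comp h).eval x - (h.comp g).eval x
      = g.vecNorm * h.vecNorm * Real.sin (h.theta - g.theta)) := by
  have hcross := g.cross_eq_vecNorm_mul_sin h
  have hnorm : 0 < g.vecNorm * h.vecNorm := mul_pos (LinFun.vecNorm_pos hg) (LinFun.vecNorm_pos hh)
  refine ⟨?_, ?_, g.comp_eval_sub_comp_eval h,
    fun x => (g.comp_eval_sub_comp_eval h x).trans hcross⟩
  · simp only [LinFun.comp_eval_lt_comp_eval_iff, forall_const, hcross, ← sin_pos_iff_mem_Ioo2pi]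
    exact mul_pos_iff_of_pos_left hnorm
  · rw [g.comp_comm_iff, hcross, ← sin_eq_zero_iff_cong, mul_eq_zero, or_iff_right hnorm.ne']
end

section
/- Let f₁,…,f_n be monotone linear functions. Then f₁,…,f_n are colinear if and only if every permutation σ of [n] is minimum (equivalently, f^σ = f^ρ for all permutations σ,ρ). -/
/-! Every composite `f^σ` has slope `∏ α(f_i)`, so all permutations are minimum iff all
composites coincide. For monotone functions this happens iff the `f_i` commute pairwise: swapping
the first two factors of a composite changes its intercept by a positive multiple of the cross
product `β(f_i)(1 - α(f_j)) - β(f_j)(1 - α(f_i))` of their vectors. In polar coordinates this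
cross product is `‖vec f_i‖ ‖vec f_j‖ sin(θ(f_j) - θ(f_i))`, which vanishes iff the two angles
agree modulo `π`. -/

namespace LinFun

theorem ext {f g : LinFun} (ha : f.a = g.a) (hb : f.b = g.b) : f = g := by
  cases f; cases g; simp_all

theorem idf_comp (f : LinFun) : idf.comp f = f := ext (by simp [comp, idf]) (by simp [comp, idf])

theorem comp_idf (f : LinFun) : f.comp idf = f := ext (by simp [comp, idf]) (by simp [comp, idf])

theorem comp_assoc (h g k : LinFun) : (h.comp g).comp k = h.comp (g.comp k) :=
  ext (by simp only [comp]; ring) (by simp only [comp]; ring)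

theorem comp_left_cancel {h g₁ g₂ : LinFun} (hh : h.a ≠ 0) (e : h.comp g₁ = h.comp g₂) :
    g₁ = g₂ := by
  have ha : h.a * g₁.a = h.a * g₂.a := congrArg a e
  have hb : h.a * g₁.b + h.b = h.a * g₂.b + h.b := congrArg b e
  exact ext (mul_left_cancel₀ hh ha) (mul_left_cancel₀ hh (add_right_cancel hb))

def cross (f g : LinFun) : ℝ := f.b * (1 - g.a) - g.b * (1 - f.a)

theorem comp_comm_iff_cross_eq_zero {f g : LinFun} : f.comp g = g.comp f ↔ cross f g = 0 := by
  constructor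
  · intro h
    have hb : f.a * g.b + f.b = g.a * f.b + g.b := congrArg b h
    simp only [cross]
    linarith
  · intro h
    simp only [cross] at h
    exact ext (mul_comm f.a g.a) (by simp only [comp]; linarith)

theorem isId_iff_vecNorm_eq_zero {f : LinFun} : f.IsId ↔ f.vecNorm = 0 := by
  rw [vecNorm, Real.sqrt_eq_zero (by positivity)]
  constructor
  · rintro rfl
    simp [idf]
  · intro h
    have hb : f.b = 0 := by nlinarith [sq_nonneg f.b, sq_nonneg (1 - f.a)]
    have ha : 1 - f.a = 0 := by nlinarith [sq_nonneg f.b, sq_nonneg (1 - f.a)]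
    exact ext (show f.a = 1 by linarith) hb

theorem vecNorm_mul_cos_theta (f : LinFun) : f.vecNorm * Real.cos f.theta = f.b := by
  have h := Complex.norm_mul_cos_arg ⟨f.b, 1 - f.a⟩
  simp only [Complex.norm_def, Complex.normSq_mk] at h
  rw [vecNorm, theta]
  split_ifs <;> simp only [Real.cos_add_two_pi, sq, h]

theorem vecNorm_mul_sin_theta (f : LinFun) : f.vecNorm * Real.sin f.theta = 1 - f.a := by
  have h := Complex.norm_mul_sin_arg ⟨f.b, 1 - f.a⟩
  simp only [Complex.norm_def, Complex.normSq_mk] at h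
  rw [vecNorm, theta]
  split_ifs <;> simp only [Real.sin_add_two_pi, sq, h]

theorem cross_eq (f g : LinFun) :
    cross f g = f.vecNorm * g.vecNorm * Real.sin (g.theta - f.theta) := by
  rw [cross, Real.sin_sub, ← vecNorm_mul_cos_theta f, ← vecNorm_mul_cos_theta g,
    ← vecNorm_mul_sin_theta f, ← vecNorm_mul_sin_theta g]
  ring

end LinFun

theorem cong_or_cong_add_pi_iff_sin_sub_eq_zero {x y : ℝ} :
    Cong x y ∨ Cong x (y + Real.pi) ↔ Real.sin (x - y) = 0 := by
  rw [Real.sin_eq_zero_iff]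
  constructor
  · rintro (⟨k, hk⟩ | ⟨k, hk⟩)
    · exact ⟨2 * k, by push_cast; linarith⟩
    · exact ⟨2 * k + 1, by push_cast; linarith⟩
  · rintro ⟨m, hm⟩
    obtain ⟨k, rfl | rfl⟩ := Int.even_or_odd' m
    · exact Or.inl ⟨k, by push_cast at hm; linarith⟩
    · exact Or.inr ⟨k, by push_cast at hm; linarith⟩

open LinFun in
theorem colinear_iff_forall_cross_eq_zero {n : ℕ} {f : Fin n → LinFun} :
    Colinear f ↔ ∀ i j, cross (f i) (f j) = 0 := by
  simp only [cross_eq, mul_eq_zero, ← isId_iff_vecNorm_eq_zero]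
  constructor
  · rintro ⟨lam, hlam⟩ i j
    rcases hlam i with hi | hi
    · exact Or.inl (Or.inl hi)
    rcases hlam j with hj | hj
    · exact Or.inl (Or.inr hj)
    rw [cong_or_cong_add_pi_iff_sin_sub_eq_zero] at hi hj
    right
    rw [show (f j).theta - (f i).theta = ((f j).theta - lam) - ((f i).theta - lam) by ring,
      Real.sin_sub, hi, hj]
    ring
  · intro h
    by_cases hid : ∀ i, (f i).IsId
    · exact ⟨0, fun i => Or.inl (hid i)⟩
    push Not at hid
    obtain ⟨i₀, hi₀⟩ := hid
    refine ⟨(f i₀).theta, fun j => or_iff_not_imp_left.mpr fun hj => ?_⟩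
    rw [cong_or_cong_add_pi_iff_sin_sub_eq_zero]
    simpa [hi₀, hj] using h i₀ j

theorem foldl_comp_eq_compList_comp (L : List LinFun) (s : LinFun) :
    L.foldl (fun acc g => g.comp acc) s = (compList L).comp s := by
  induction L generalizing s with
  | nil => exact (LinFun.idf_comp s).symm
  | cons g L ih =>
    rw [List.foldl_cons, ih]
    conv_rhs => rw [compList, List.foldl_cons, ih, LinFun.comp_idf, LinFun.comp_assoc]

theorem compList_cons (g : LinFun) (L : List LinFun) :
    compList (g :: L) = (compList L).comp g := by
  rw [compList, List.foldl_cons, foldl_comp_eq_compList_comp, LinFun.comp_idf]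

theorem compList_a (L : List LinFun) : (compList L).a = (L.map LinFun.a).prod := by
  induction L with
  | nil => simp [compList, LinFun.idf]
  | cons g L ih => rw [compList_cons]; simp [LinFun.comp, ih, mul_comm]

theorem compList_cons_cons (g h : LinFun) (L : List LinFun) :
    compList (g :: h :: L) = (compList L).comp (h.comp g) := by
  rw [compList_cons, compList_cons, LinFun.comp_assoc]

theorem compList_a_pos {L : List LinFun} (h : ∀ g ∈ L, 0 < g.a) : 0 < (compList L).a := by
  rw [compList_a]
  exact List.prod_pos (by simpa using h)

theorem permList_eq_cons_cons {m : ℕ} (f : Fin (m + 2) → LinFun)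
    (σ : Equiv.Perm (Fin (m + 2))) :
    permList f σ = f (σ 0) :: f (σ 1) :: List.ofFn fun k : Fin m => f (σ k.succ.succ) := by
  simp [permList, List.ofFn_succ]

section Permutations

variable {n : ℕ} (f : Fin n → LinFun)

theorem permList_perm (σ ρ : Equiv.Perm (Fin n)) : (permList f σ).Perm (permList f ρ) :=
  (σ.ofFn_comp_perm f).trans (ρ.ofFn_comp_perm f).symm

theorem permComp_a_eq (σ ρ : Equiv.Perm (Fin n)) : (permComp f σ).a = (permComp f ρ).a := by
  rw [permComp, permComp, compList_a, compList_a]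
  exact ((permList_perm f σ ρ).map _).prod_eq

theorem forall_isMinimum_iff_forall_permComp_eq :
    (∀ σ, IsMinimum f σ) ↔ ∀ σ ρ : Equiv.Perm (Fin n), permComp f σ = permComp f ρ :=
  ⟨fun h σ ρ => LinFun.ext (permComp_a_eq f σ ρ) (le_antisymm (h σ ρ) (h ρ σ)),
    fun h σ ρ => (congrArg LinFun.b (h σ ρ)).le⟩

theorem permComp_eq_of_pairwise_comp_comm (h : ∀ i j, (f i).comp (f j) = (f j).comp (f i))
    (σ ρ : Equiv.Perm (Fin n)) : permComp f σ = permComp f ρ := by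
  refine (permList_perm f σ ρ).foldl_eq' ?_ _
  intro x hx y hy z
  obtain ⟨i, rfl⟩ := List.mem_ofFn.mp hx
  obtain ⟨j, rfl⟩ := List.mem_ofFn.mp hy
  simp only [← LinFun.comp_assoc, h]

theorem comp_comm_of_forall_permComp_eq (hf : ∀ i, 0 < (f i).a)
    (h : ∀ σ ρ : Equiv.Perm (Fin n), permComp f σ = permComp f ρ) (i j : Fin n) :
    (f i).comp (f j) = (f j).comp (f i) := by
  rcases eq_or_ne i j with rfl | hij
  · rfl
  obtain ⟨m, rfl⟩ : ∃ m, n = m + 2 := ⟨n - 2, by have := Fin.val_ne_of_ne hij; omega⟩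
  obtain ⟨σ, hσ0, hσ1⟩ := MulAction.is_two_pretransitive_iff.mp
    (Equiv.Perm.isMultiplyPretransitive _ 2) zero_ne_one hij
  have hswap (k : Fin m) : Equiv.swap 0 1 k.succ.succ = k.succ.succ :=
    Equiv.swap_apply_of_ne_of_ne (Fin.succ_ne_zero _) (by simp [Fin.ext_iff])
  have key := h σ (σ * Equiv.swap 0 1)
  simp only [permComp, permList_eq_cons_cons, Equiv.Perm.coe_mul, Function.comp_apply,
    Equiv.swap_apply_left, Equiv.swap_apply_right, hswap, compList_cons_cons] at key
  rw [← Equiv.Perm.smul_def, ← Equiv.Perm.smul_def, hσ0, hσ1] at key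
  refine (LinFun.comp_left_cancel (compList_a_pos ?_).ne' key).symm
  simp only [List.mem_ofFn, forall_exists_index]
  rintro _ k rfl
  exact hf _

theorem forall_permComp_eq_iff_pairwise_comp_comm (hf : ∀ i, 0 < (f i).a) :
    (∀ σ ρ : Equiv.Perm (Fin n), permComp f σ = permComp f ρ) ↔
      ∀ i j, (f i).comp (f j) = (f j).comp (f i) :=
  ⟨comp_comm_of_forall_permComp_eq f hf, permComp_eq_of_pairwise_comp_comm f⟩

end Permutations

/-- Theorem: colinearity is equivalent to every permutation being minimum. -/
theorem stmt2 {n : ℕ} (f : Fin n → LinFun) (hf : ∀ i, 0 < (f i).a) :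
    (Colinear f ↔ ∀ σ : Equiv.Perm (Fin n), IsMinimum f σ) ∧
    ((∀ σ : Equiv.Perm (Fin n), IsMinimum f σ) ↔
      ∀ σ ρ : Equiv.Perm (Fin n), permComp f σ = permComp f ρ) := by
  refine ⟨?_, forall_isMinimum_iff_forall_permComp_eq f⟩
  rw [forall_isMinimum_iff_forall_permComp_eq, forall_permComp_eq_iff_pairwise_comp_comm f hf,
    colinear_iff_forall_cross_eq_zero]
  simp only [LinFun.comp_comm_iff_cross_eq_zero]
end

section
/- Let f₁,…,f_n be arbitrary linear functions. There exists a real number r>0 such that for every real ε with |ε|<r and all permutations σ,ρ of [n]: if β((f^{(ε)})^σ) ≤ β((f^{(ε)})^ρ), then β(f^σ) ≤ β(f^ρ). Here f_i^{(ε)}(x) = f_i(x) if α(f_i) ≠ 0, and f_i^{(ε)}(x) = f_i(x)+εx if α(f_i) = 0. -/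
/-!
Each intercept `β((f^{(ε)})^σ)` is a polynomial, hence continuous, function of `ε` which equals
`β(f^σ)` at `ε = 0`. The finitely many strict inequalities between the values at `ε = 0` therefore
persist on a neighbourhood of `0`, and on that neighbourhood no comparison can be reversed.
-/

open Filter Topology

def LinFun.ContinuousFamily {X : Type*} [TopologicalSpace X] (F : X → LinFun) : Prop :=
  Continuous (fun x => (F x).a) ∧ Continuous (fun x => (F x).b)

namespace LinFun.ContinuousFamily

variable {X : Type*} [TopologicalSpace X]

lemma const (g : LinFun) : ContinuousFamily (fun _ : X => g) :=
  ⟨continuous_const, continuous_const⟩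

lemma comp {F G : X → LinFun} (hF : ContinuousFamily F) (hG : ContinuousFamily G) :
    ContinuousFamily (fun x => (F x).comp (G x)) :=
  ⟨hF.1.mul hG.1, (hF.1.mul hG.2).add hF.2⟩

lemma compList_ofFn {m : ℕ} {F : Fin m → X → LinFun} (hF : ∀ i, ContinuousFamily (F i)) :
    ContinuousFamily (fun x => compList (List.ofFn fun i => F i x)) := by
  induction m with
  | zero => exact const _
  | succ m ih =>
    simp only [compList, List.ofFn_succ', List.concat_eq_append, List.foldl_concat]
    exact (hF _).comp (ih fun i => hF i.castSucc)

end LinFun.ContinuousFamily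

lemma epsPert_zero (g : LinFun) : epsPert g 0 = g := by
  unfold epsPert
  split_ifs with h
  · rw [← h]
  · rfl

lemma continuousFamily_epsPert (g : LinFun) : LinFun.ContinuousFamily (epsPert g) := by
  unfold epsPert
  split_ifs
  · exact ⟨continuous_id, continuous_const⟩
  · exact LinFun.ContinuousFamily.const g

lemma continuous_permComp_epsPert_b {n : ℕ} (f : Fin n → LinFun) (σ : Equiv.Perm (Fin n)) :
    Continuous (fun ε => (permComp (fun i => epsPert (f i) ε) σ).b) :=
  (LinFun.ContinuousFamily.compList_ofFn fun i => continuousFamily_epsPert (f (σ i))).2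

lemma eventually_forall_le_imp_le {X ι α : Type*} [TopologicalSpace X] [Finite ι]
    [LinearOrder α] [TopologicalSpace α] [OrderClosedTopology α] {G : ι → X → α} {x₀ : X}
    (hG : ∀ i, ContinuousAt (G i) x₀) :
    ∀ᶠ x in 𝓝 x₀, ∀ i j, G i x ≤ G j x → G i x₀ ≤ G j x₀ := by
  simp only [eventually_all]
  intro i j
  by_cases hij : G i x₀ ≤ G j x₀
  · exact Eventually.of_forall fun _ _ => hij
  · filter_upwards [(hG j).eventually_lt (hG i) (not_le.mp hij)] with x hx hle
    exact absurd hle (not_le.mpr hx)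

/-- small perturbations preserve the comparison of composites. -/
theorem stmt14 {n : ℕ} (f : Fin n → LinFun) :
    ∃ r : ℝ, 0 < r ∧ ∀ ε : ℝ, |ε| < r → ∀ σ ρ : Equiv.Perm (Fin n),
      (permComp (fun i => epsPert (f i) ε) σ).b ≤
        (permComp (fun i => epsPert (f i) ε) ρ).b →
      (permComp f σ).b ≤ (permComp f ρ).b := by
  obtain ⟨r, hr, hball⟩ := Metric.eventually_nhds_iff.mp <| eventually_forall_le_imp_le
    fun σ => (continuous_permComp_epsPert_b f σ).continuousAt (x := 0)
  refine ⟨r, hr, fun ε hε σ ρ hle => ?_⟩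
  simpa only [epsPert_zero] using hball (by rwa [Real.dist_0_eq_abs]) σ ρ hle
end

section
/- For i∈[m], let a_i, b_i, d_i be real numbers, and say that indices i and j commute if max(a_j+b_i, b_j+d_i) = max(a_i+b_j, b_i+d_j) (this is precisely commutativity, under max-plus matrix multiplication, of the 2×2 upper triangular max-plus matrices with diagonal (a_i,d_i) and upper-right entry b_i). Then every pair of indices in [m] commutes if and only if one of the following holds: (i) a_i ≥ d_i for all i∈[m] and there exists c∈ℝ such that c = b_k − a_k for every k with a_k > d_k and c ≥ b_k − a_k for every k with a_k = d_k; or (ii) a_i ≤ d_i for all i∈[m] and there exists c∈ℝ such that c = d_k − b_k for every k with a_k < d_k and c ≤ d_k − b_k for every k with a_k = d_k. -/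
/-- characterization of pairwise commutation of 2×2 upper triangular
max-plus matrices `[[a_i, b_i], [-∞, d_i]]`. -/
theorem stmt19 {m : ℕ} (a b d : Fin m → ℝ) :
    (∀ i j : Fin m,
        max (a j + b i) (b j + d i) = max (a i + b j) (b i + d j)) ↔
      ((∀ i, d i ≤ a i) ∧ ∃ c : ℝ,
          (∀ k, d k < a k → c = b k - a k) ∧
          (∀ k, a k = d k → b k - a k ≤ c)) ∨
      ((∀ i, a i ≤ d i) ∧ ∃ c : ℝ,
          (∀ k, a k < d k → c = d k - b k) ∧
          (∀ k, a k = d k → c ≤ d k - b k)) := by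
  constructor
  · intro h
    by_cases hA : ∀ i, d i ≤ a i
    · left
      refine ⟨hA, ?_⟩
      by_cases hs : ∃ k0, d k0 < a k0
      · obtain ⟨k0, hk0⟩ := hs
        refine ⟨b k0 - a k0, fun k hk => ?_, fun k hk => ?_⟩
        · have h' := h k k0
          simp only [max_def] at h'
          split_ifs at h' <;> linarith
        · have h' := h k k0
          simp only [max_def] at h'
          split_ifs at h' <;> linarith
      · push_neg at hs
        rcases isEmpty_or_nonempty (Fin m) with he | hne
        · exact ⟨0, fun k _ => he.elim k, fun k _ => he.elim k⟩
        · refine ⟨Finset.univ.sup' Finset.univ_nonempty (fun k => b k - a k),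
            fun k hk => absurd hk (not_lt.2 (hs k)), fun k _ => ?_⟩
          exact Finset.le_sup' (fun k => b k - a k) (Finset.mem_univ k)
    · right
      push_neg at hA
      obtain ⟨i0, hi0⟩ := hA
      have hB : ∀ j, a j ≤ d j := by
        intro j
        by_contra hj
        push_neg at hj
        have h' := h j i0
        simp only [max_def] at h'
        split_ifs at h' <;> linarith
      refine ⟨hB, d i0 - b i0, fun k hk => ?_, fun k hk => ?_⟩
      · have h' := h k i0
        simp only [max_def] at h'
        split_ifs at h' <;> linarith
      · have h' := h k i0
        simp only [max_def] at h'
        split_ifs at h' <;> linarith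
  · rintro (⟨hA, c, hc1, hc2⟩ | ⟨hA, c, hc1, hc2⟩) <;> intro i j
    · rcases lt_or_eq_of_le (hA i) with hi | hi <;>
        rcases lt_or_eq_of_le (hA j) with hj | hj
      · have e1 := hc1 i hi; have e2 := hc1 j hj
        simp only [max_def]; split_ifs <;> linarith
      · have e1 := hc1 i hi; have e2 := hc2 j hj.symm
        simp only [max_def]; split_ifs <;> linarith
      · have e1 := hc2 i hi.symm; have e2 := hc1 j hj
        simp only [max_def]; split_ifs <;> linarith
      · have e1 := hc2 i hi.symm; have e2 := hc2 j hj.symm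
        simp only [max_def]; split_ifs <;> linarith
    · rcases lt_or_eq_of_le (hA i) with hi | hi <;>
        rcases lt_or_eq_of_le (hA j) with hj | hj
      · have e1 := hc1 i hi; have e2 := hc1 j hj
        simp only [max_def]; split_ifs <;> linarith
      · have e1 := hc1 i hi; have e2 := hc2 j hj
        simp only [max_def]; split_ifs <;> linarith
      · have e1 := hc2 i hi; have e2 := hc1 j hj
        simp only [max_def]; split_ifs <;> linarith
      · have e1 := hc2 i hi; have e2 := hc2 j hj
        simp only [max_def]; split_ifs <;> linarith
end
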